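/- arXiv:1011.4782 — 2 statements merged into one kernel-verified Lean document; each statement's English description precedes it below -/
import Mathlib

section
/- Let F : A → B be an exact functor between abelian categories with an exact right adjoint G. If F is fully faithful, then the induced functor D^b(F) : D^b(A) → D^b(B) is fully faithful. -/
open CategoryTheory CategoryTheory.Limits

variable (A : Type*) [Category A] [Abelian A]

/-- The category of bounded cochain complexes over `A`. -/
abbrev BoundedComplex :=
  CategoryTheory.ObjectProperty.FullSubcategory
    (fun X : CochainComplex A ℤ => ∃ a b : ℤ, ∀ i : ℤ, (i < a ∨ b < i) → IsZero (X.X i))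

/-- Quasi-isomorphisms between bounded complexes.  The bounded derived category `D^b(A)`
is the localization of the category of bounded complexes at this class of morphisms. -/
def boundedQis : MorphismProperty (BoundedComplex A) :=
  fun X Y f => QuasiIso (f.hom : X.obj ⟶ Y.obj)

variable {A} {B : Type*} [Category B] [Abelian B]

/-- The functor on bounded complexes induced by an additive functor `F : A ⥤ B`. -/
def mapBounded (F : A ⥤ B) [F.Additive] : BoundedComplex A ⥤ BoundedComplex B :=
  ObjectProperty.lift _
    (ObjectProperty.ι _ ⋙ F.mapHomologicalComplex (ComplexShape.up ℤ))
    (fun X => by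
      obtain ⟨a, b, h⟩ := X.2
      exact ⟨a, b, fun i hi => F.map_isZero (h i hi)⟩)


/-- The hom equivalence on complexes induced by an adjunction. -/
@[simps]
def homEquivHC {F : A ⥤ B} {G : B ⥤ A} (adj : F ⊣ G) [F.Additive] [G.Additive]
    (X : CochainComplex A ℤ) (Y : CochainComplex B ℤ) :
    ((F.mapHomologicalComplex (ComplexShape.up ℤ)).obj X ⟶ Y) ≃
      (X ⟶ (G.mapHomologicalComplex (ComplexShape.up ℤ)).obj Y) where
  toFun f :=
    { f := fun i => adj.homEquiv _ _ (f.f i)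
      comm' := fun i j _ => by
        have := f.comm i j
        replace this : f.f i ≫ Y.d i j = F.map (X.d i j) ≫ f.f j := this
        change adj.homEquiv _ _ (f.f i) ≫ G.map (Y.d i j) = X.d i j ≫ adj.homEquiv _ _ (f.f j)
        exact (adj.homEquiv_naturality_right (f.f i) (Y.d i j)).symm.trans
          ((congrArg (adj.homEquiv _ _) this).trans (adj.homEquiv_naturality_left (X.d i j) (f.f j))) }
  invFun g :=
    { f := fun i => (adj.homEquiv _ _).symm (g.f i)
      comm' := fun i j _ => by
        have := g.comm i j
        replace this : g.f i ≫ G.map (Y.d i j) = X.d i j ≫ g.f j := this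
        change (adj.homEquiv _ _).symm (g.f i) ≫ Y.d i j = F.map (X.d i j) ≫ (adj.homEquiv _ _).symm (g.f j)
        exact (adj.homEquiv_naturality_right_symm (g.f i) (Y.d i j)).symm.trans
          ((congrArg (adj.homEquiv _ _).symm this).trans
            (adj.homEquiv_naturality_left_symm (X.d i j) (g.f j))) }
  left_inv f := by ext i; exact (adj.homEquiv _ _).symm_apply_apply _
  right_inv g := by ext i; exact (adj.homEquiv _ _).apply_symm_apply _

lemma isIso_app_of_essSurj {C D : Type*} [Category C] [Category D]
    {H K : C ⥤ D} (α : H ⟶ K) (Y : C) {X : C} (e : Y ≅ X) [IsIso (α.app X)] :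
    IsIso (α.app Y) := by
  have : α.app Y = H.map e.hom ≫ α.app X ≫ K.map e.inv := by
    have h2 := α.naturality e.hom
    rw [← Category.assoc, h2, Category.assoc, ← K.map_comp, e.hom_inv_id, K.map_id,
      Category.comp_id]
  rw [this]
  infer_instance

lemma homEquivHC_naturality_left_symm {F : A ⥤ B} {G : B ⥤ A} (adj : F ⊣ G)
    [F.Additive] [G.Additive] {X' X : CochainComplex A ℤ} {Y : CochainComplex B ℤ}
    (f : X' ⟶ X) (g : X ⟶ (G.mapHomologicalComplex (ComplexShape.up ℤ)).obj Y) :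
    (homEquivHC adj X' Y).symm (f ≫ g) =
      (F.mapHomologicalComplex (ComplexShape.up ℤ)).map f ≫ (homEquivHC adj X Y).symm g := by
  ext i
  exact adj.homEquiv_naturality_left_symm _ _

lemma homEquivHC_naturality_right {F : A ⥤ B} {G : B ⥤ A} (adj : F ⊣ G)
    [F.Additive] [G.Additive] {X : CochainComplex A ℤ} {Y Y' : CochainComplex B ℤ}
    (f : (F.mapHomologicalComplex (ComplexShape.up ℤ)).obj X ⟶ Y) (g : Y ⟶ Y') :
    homEquivHC adj X Y' (f ≫ g) =
      homEquivHC adj X Y f ≫ (G.mapHomologicalComplex (ComplexShape.up ℤ)).map g := by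
  ext i
  exact adj.homEquiv_naturality_right _ _

/-- The adjunction between `mapBounded F` and `mapBounded G` induced by `F ⊣ G`. -/
def adjBounded {F : A ⥤ B} {G : B ⥤ A} (adj : F ⊣ G) [F.Additive] [G.Additive] :
    mapBounded F ⊣ mapBounded G :=
  Adjunction.mkOfHomEquiv
    { homEquiv := fun X Y => InducedCategory.homEquiv.trans
        ((homEquivHC adj X.obj Y.obj).trans (InducedCategory.homEquiv (X := X) (Y := (mapBounded G).obj Y)).symm)
      homEquiv_naturality_left_symm := fun f g =>
        InducedCategory.hom_ext (homEquivHC_naturality_left_symm adj f.hom g.hom)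
      homEquiv_naturality_right := fun f g =>
        InducedCategory.hom_ext (homEquivHC_naturality_right adj f.hom g.hom) }

lemma adjBounded_unit_app_f {F : A ⥤ B} {G : B ⥤ A} (adj : F ⊣ G) [F.Additive] [G.Additive]
    (X : BoundedComplex A) (i : ℤ) :
    ((ObjectProperty.ι _).map ((adjBounded adj).unit.app X)).f i =
      adj.unit.app (X.obj.X i) := by
  exact adj.homEquiv_id _

/-- Let `F : A ⥤ B` be an exact functor between abelian categories with an exact right
adjoint `G`.  If `F` is fully faithful, then the induced functor
`D^b(F) : D^b(A) ⥤ D^b(B)` between the bounded derived categories is fully faithful. -/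
theorem stmt_4 (F : A ⥤ B) (G : B ⥤ A) (adj : F ⊣ G)
    [F.Additive] [PreservesFiniteLimits F] [PreservesFiniteColimits F]
    [G.Additive] [PreservesFiniteLimits G] [PreservesFiniteColimits G]
    {DbA DbB : Type*} [Category DbA] [Category DbB]
    (qA : BoundedComplex A ⥤ DbA) [qA.IsLocalization (boundedQis A)]
    (qB : BoundedComplex B ⥤ DbB) [qB.IsLocalization (boundedQis B)]
    (DbF : DbA ⥤ DbB) (eF : qA ⋙ DbF ≅ mapBounded F ⋙ qB)
    (DbG : DbB ⥤ DbA) (eG : qB ⋙ DbG ≅ mapBounded G ⋙ qA)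
    [F.Full] [F.Faithful] :
    DbF.Full ∧ DbF.Faithful := by
  letI adj2 : mapBounded F ⊣ mapBounded G := adjBounded adj
  letI : CatCommSq (mapBounded F) qA qB DbF := ⟨eF.symm⟩
  letI : CatCommSq (mapBounded G) qB qA DbG := ⟨eG.symm⟩
  let adj' : DbF ⊣ DbG :=
    adj2.localization qA (boundedQis A) qB (boundedQis B) DbF DbG
  -- the unit of `adj2` is an isomorphism objectwise since `F` is fully faithful
  haveI hunit : ∀ X : BoundedComplex A, IsIso (adj2.unit.app X) := by
    intro X
    haveI : IsIso ((ObjectProperty.ι _).map (adj2.unit.app X)) := by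
      haveI : ∀ i, IsIso (((ObjectProperty.ι _).map (adj2.unit.app X)).f i) := by
        intro i
        rw [adjBounded_unit_app_f adj X i]
        exact NatIso.isIso_app_of_isIso adj.unit _
      exact HomologicalComplex.Hom.isIso_of_components _
    exact isIso_of_reflects_iso _ (ObjectProperty.ι _)
  haveI : ∀ Y : DbA, IsIso (adj'.unit.app Y) := by
    intro Y
    haveI := Localization.essSurj qA (boundedQis A)
    haveI : IsIso (adj'.unit.app (qA.obj (qA.objPreimage Y))) := by
      rw [Adjunction.localization_unit_app]
      infer_instance
    exact isIso_app_of_essSurj adj'.unit Y (qA.objObjPreimageIso Y).symm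
  haveI : IsIso adj'.unit := NatIso.isIso_of_isIso_app _
  exact ⟨adj'.fullyFaithfulLOfIsIsoUnit.full, adj'.fullyFaithfulLOfIsIsoUnit.faithful⟩
end

section
/- Let i : T' → T be a fully faithful triangle functor between triangulated categories admitting both a left adjoint i_λ and a right adjoint i_ρ. Then the diagram (i_λ, i, i_ρ) together with the Verdier quotient functor q : T → T/Im(i) and its left and right adjoints forms a recollement of T relative to T' and T/Im(i). -/
set_option linter.unusedSectionVars false

open CategoryTheory CategoryTheory.Limits CategoryTheory.Pretriangulated

variable {T' T : Type*} [Category T'] [Category T]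
  [Preadditive T'] [HasZeroObject T'] [HasShift T' ℤ]
  [∀ n : ℤ, (shiftFunctor T' n).Additive] [Pretriangulated T']
  [Preadditive T] [HasZeroObject T] [HasShift T ℤ]
  [∀ n : ℤ, (shiftFunctor T n).Additive] [Pretriangulated T]

/-- The class of morphisms of `T` whose cone lies in the essential image of `i`;
the Verdier quotient `T/Im(i)` is the localization of `T` with respect to this class. -/
def coneInImage (i : T' ⥤ T) : MorphismProperty T :=
  fun X Y f => ∃ (Z : T) (g : Y ⟶ Z) (h : Z ⟶ X⟦(1 : ℤ)⟧),
    (Triangle.mk f g h ∈ distTriang T) ∧ i.essImage Z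

namespace Stmt7Aux

open Localization

/-- A dual version of `Adjunction.isLocalization`: if `G ⊣ F` with `G` fully faithful,
then the right adjoint `F` is a localization functor. -/
lemma isLocalization_of_leftAdjoint_fullyFaithful {C₁ C₂ : Type*} [Category C₁] [Category C₂]
    {G : C₂ ⥤ C₁} {F : C₁ ⥤ C₂} (adj : G ⊣ F) [G.Full] [G.Faithful] :
    F.IsLocalization ((MorphismProperty.isomorphisms C₂).inverseImage F) := by
  let W := ((MorphismProperty.isomorphisms C₂).inverseImage F)
  have hF : W.IsInvertedBy F := fun _ _ _ hf => hf
  have hco : ∀ (X : C₁), W (adj.counit.app X) := by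
    intro X
    change IsIso (F.map (adj.counit.app X))
    have h : adj.unit.app (F.obj X) ≫ F.map (adj.counit.app X) = 𝟙 _ :=
      adj.right_triangle_components X
    have : IsIso (adj.unit.app (F.obj X) ≫ F.map (adj.counit.app X)) := by
      rw [h]; infer_instance
    exact IsIso.of_isIso_comp_left (adj.unit.app (F.obj X)) (F.map (adj.counit.app X))
  have hQ : ∀ X, IsIso ((Functor.whiskerRight adj.counit W.Q).app X) := fun X =>
    Localization.inverts W.Q W _ (hco X)
  have hiso : IsIso (Functor.whiskerRight adj.counit W.Q) := NatIso.isIso_of_isIso_app _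
  letI : Localization.Lifting W.Q W ((F ⋙ G) ⋙ W.Q)
      (Localization.lift F hF W.Q ⋙ (G ⋙ W.Q)) :=
    ⟨Functor.isoWhiskerLeft W.Q (Functor.associator (Localization.lift F hF W.Q) G W.Q).symm ≪≫
      (Functor.associator W.Q (Localization.lift F hF W.Q ⋙ G) W.Q).symm ≪≫
      Functor.isoWhiskerRight ((Functor.associator W.Q (Localization.lift F hF W.Q) G).symm ≪≫
        Functor.isoWhiskerRight (Localization.fac F hF W.Q) G) W.Q⟩
  let e : W.Localization ≌ C₂ := CategoryTheory.Equivalence.mk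
    (Localization.lift F hF W.Q) (G ⋙ W.Q)
    (Localization.liftNatIso W.Q W W.Q ((F ⋙ G) ⋙ W.Q) (𝟭 _)
      (Localization.lift F hF W.Q ⋙ (G ⋙ W.Q))
      ((asIso (Functor.whiskerRight adj.counit W.Q) ≪≫ W.Q.leftUnitor).symm))
    (Functor.associator _ _ _ ≪≫ Functor.isoWhiskerLeft G (Localization.fac F hF W.Q) ≪≫
      (asIso adj.unit).symm)
  exact Functor.IsLocalization.of_equivalence_target W.Q W F e (Localization.fac F hF W.Q)

section

variable (i : T' ⥤ T) [i.CommShift ℤ] [i.Full] [i.Faithful]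

lemma essImage_shift {Z : T} (hZ : i.essImage Z) (n : ℤ) : i.essImage (Z⟦n⟧) := by
  obtain ⟨A, ⟨e⟩⟩ := hZ
  exact ⟨A⟦n⟧, ⟨(i.commShiftIso n).app A ≪≫ (shiftFunctor T n).mapIso e⟩⟩

/-- local objects : no nonzero maps from the image of `i`. -/
def isLoc (L : T) : Prop := ∀ (A : T') (f : i.obj A ⟶ L), f = 0

/-- colocal objects : no nonzero maps to the image of `i`. -/
def isColoc (L : T) : Prop := ∀ (A : T') (f : L ⟶ i.obj A), f = 0

lemma isLoc_zero_from {L Z : T} (hL : isLoc i L) (hZ : i.essImage Z) (f : Z ⟶ L) : f = 0 := by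
  obtain ⟨A, ⟨e⟩⟩ := hZ
  have h := hL A (e.hom ≫ f)
  calc f = e.inv ≫ (e.hom ≫ f) := by simp
  _ = 0 := by rw [h, comp_zero]

lemma isColoc_zero_to {L Z : T} (hL : isColoc i L) (hZ : i.essImage Z) (f : L ⟶ Z) : f = 0 := by
  obtain ⟨A, ⟨e⟩⟩ := hZ
  have h := hL A (f ≫ e.inv)
  calc f = (f ≫ e.inv) ≫ e.hom := by simp
  _ = 0 := by rw [h, zero_comp]

lemma isLoc_shift {L : T} (hL : isLoc i L) (n : ℤ) : isLoc i (L⟦n⟧) := by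
  intro A φ
  let adjS := (shiftEquiv T n).symm.toAdjunction
  have h : (adjS.homEquiv (i.obj A) L).symm φ = 0 :=
    isLoc_zero_from i hL (essImage_shift i ⟨A, ⟨Iso.refl _⟩⟩ (-n)) _
  have h2 := (adjS.homEquiv (i.obj A) L).apply_symm_apply φ
  rw [h] at h2
  rw [← h2, Adjunction.homEquiv_unit, Functor.map_zero, comp_zero]
  rfl

lemma isColoc_shift {L : T} (hL : isColoc i L) (n : ℤ) : isColoc i (L⟦n⟧) := by
  intro A φ
  let adjS := (shiftEquiv T n).toAdjunction
  have h : (adjS.homEquiv L (i.obj A)) φ = 0 :=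
    isColoc_zero_to i hL (essImage_shift i ⟨A, ⟨Iso.refl _⟩⟩ (-n)) _
  have h2 := (adjS.homEquiv L (i.obj A)).symm_apply_apply φ
  rw [h] at h2
  rw [← h2, Adjunction.homEquiv_counit, Functor.map_zero, zero_comp]
  rfl

lemma postBij_shift {B C : T} {w : B ⟶ C}
    (h : ∀ Z, i.essImage Z → Function.Bijective (fun g : Z ⟶ B => g ≫ w)) (n : ℤ) :
    ∀ Z, i.essImage Z → Function.Bijective (fun g : Z ⟶ B⟦n⟧ => g ≫ w⟦n⟧') := by
  intro Z hZ
  let adjS := (shiftEquiv T n).symm.toAdjunction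
  have key : (fun g : Z ⟶ B⟦n⟧ => g ≫ w⟦n⟧')
      = (adjS.homEquiv Z C) ∘ (fun g : Z⟦-n⟧ ⟶ B => g ≫ w) ∘ (adjS.homEquiv Z B).symm := by
    funext g
    dsimp only [Function.comp]
    rw [Adjunction.homEquiv_naturality_right]
    erw [Equiv.apply_symm_apply]
    rfl
  rw [key]
  exact (Equiv.bijective _).comp ((h _ (essImage_shift i hZ (-n))).comp (Equiv.bijective _))

lemma preBij_shift {B C : T} {w : B ⟶ C}
    (h : ∀ Z, i.essImage Z → Function.Bijective (fun g : C ⟶ Z => w ≫ g)) (n : ℤ) :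
    ∀ Z, i.essImage Z → Function.Bijective (fun g : C⟦n⟧ ⟶ Z => w⟦n⟧' ≫ g) := by
  intro Z hZ
  let adjS := (shiftEquiv T n).toAdjunction
  have key : (fun g : C⟦n⟧ ⟶ Z => w⟦n⟧' ≫ g)
      = (adjS.homEquiv B Z).symm ∘ (fun g : C ⟶ Z⟦-n⟧ => w ≫ g) ∘ (adjS.homEquiv C Z) := by
    funext g
    dsimp only [Function.comp]
    erw [← Adjunction.homEquiv_naturality_left, Equiv.symm_apply_apply]
    rfl
  rw [key]
  exact (Equiv.bijective _).comp ((h _ (essImage_shift i hZ (-n))).comp (Equiv.bijective _))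

lemma wLoc_shift {X Y : T} {f : X ⟶ Y} (hf : ObjectProperty.isLocal (isLoc i) f) (n : ℤ) :
    ObjectProperty.isLocal (isLoc i) (f⟦n⟧') := by
  intro L hL
  let adjS := (shiftEquiv T n).toAdjunction
  have key : (fun g : Y⟦n⟧ ⟶ L => f⟦n⟧' ≫ g)
      = (adjS.homEquiv X L).symm ∘ (fun g : Y ⟶ L⟦-n⟧ => f ≫ g) ∘ (adjS.homEquiv Y L) := by
    funext g
    dsimp only [Function.comp]
    erw [← Adjunction.homEquiv_naturality_left, Equiv.symm_apply_apply]
    rfl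
  rw [key]
  exact (Equiv.bijective _).comp ((hf _ (isLoc_shift i hL (-n))).comp (Equiv.bijective _))

/-- The dual Bousfield class: postcomposition bijective on colocal test objects. -/
def wColoc : MorphismProperty T :=
  fun X _ f => ∀ L, isColoc i L → Function.Bijective (fun g : L ⟶ X => g ≫ f)

lemma wColoc_shift {X Y : T} {f : X ⟶ Y} (hf : wColoc i f) (n : ℤ) :
    wColoc i (f⟦n⟧') := by
  intro L hL
  let adjS := (shiftEquiv T n).symm.toAdjunction
  have key : (fun g : L ⟶ X⟦n⟧ => g ≫ f⟦n⟧')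
      = (adjS.homEquiv L Y) ∘ (fun g : L⟦-n⟧ ⟶ X => g ≫ f) ∘ (adjS.homEquiv L X).symm := by
    funext g
    dsimp only [Function.comp]
    rw [Adjunction.homEquiv_naturality_right]
    erw [Equiv.apply_symm_apply]
    rfl
  rw [key]
  exact (Equiv.bijective _).comp ((hf _ (isColoc_shift i hL (-n))).comp (Equiv.bijective _))

lemma cone_le_wLoc {X Y : T} {f : X ⟶ Y} (hf : coneInImage i f) :
    ObjectProperty.isLocal (isLoc i) f := by
  obtain ⟨Z, g, h, hT, hZ⟩ := hf
  intro L hL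
  constructor
  · intro u₁ u₂ hu
    dsimp only at hu
    have h0 : f ≫ (u₁ - u₂) = 0 := by rw [Preadditive.comp_sub, hu, sub_self]
    obtain ⟨v, hv⟩ := Triangle.yoneda_exact₂ _ hT _ h0
    rw [isLoc_zero_from i hL hZ v] at hv
    erw [comp_zero] at hv
    exact sub_eq_zero.mp hv
  · intro u
    obtain ⟨v, hv⟩ := Triangle.yoneda_exact₂ _ (inv_rot_of_distTriang _ hT) u
      (isLoc_zero_from i hL (essImage_shift i hZ (-1)) _)
    exact ⟨v, hv.symm⟩

lemma cone_le_wColoc {X Y : T} {f : X ⟶ Y} (hf : coneInImage i f) :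
    wColoc i f := by
  obtain ⟨Z, g, h, hT, hZ⟩ := hf
  intro L hL
  constructor
  · intro u₁ u₂ hu
    dsimp only at hu
    have h0 : (u₁ - u₂) ≫ f = 0 := by rw [Preadditive.sub_comp, hu, sub_self]
    obtain ⟨v, hv⟩ := Triangle.coyoneda_exact₂ _ (inv_rot_of_distTriang _ hT) (u₁ - u₂) h0
    rw [isColoc_zero_to i hL (essImage_shift i hZ (-1)) v] at hv
    erw [zero_comp] at hv
    exact sub_eq_zero.mp hv
  · intro u
    obtain ⟨v, hv⟩ := Triangle.coyoneda_exact₂ _ hT u (isColoc_zero_to i hL hZ _)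
    exact ⟨v, hv.symm⟩

end

section RightAdjoint

variable (i : T' ⥤ T) [i.CommShift ℤ] [i.Full] [i.Faithful]
  (ir : T ⥤ T') (adj_ir : i ⊣ ir)

lemma eps_bij (X : T) :
    ∀ Z, i.essImage Z →
      Function.Bijective (fun g : Z ⟶ i.obj (ir.obj X) => g ≫ adj_ir.counit.app X) := by
  have base : ∀ (A : T'),
      Function.Bijective (fun g : i.obj A ⟶ i.obj (ir.obj X) => g ≫ adj_ir.counit.app X) := by
    intro A
    have key : (fun g : i.obj A ⟶ i.obj (ir.obj X) => g ≫ adj_ir.counit.app X)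
        = (adj_ir.homEquiv A X).symm ∘
          ((Functor.FullyFaithful.ofFullyFaithful i).homEquiv (X := A) (Y := ir.obj X)).symm := by
      funext g
      dsimp only [Function.comp]
      rw [Adjunction.homEquiv_counit]
      congr 1
      exact ((Functor.FullyFaithful.ofFullyFaithful i).map_preimage g).symm
    rw [key]
    exact (Equiv.bijective _).comp (Equiv.bijective _)
  intro Z hZ
  obtain ⟨A, ⟨e⟩⟩ := hZ
  have key : (fun g : Z ⟶ i.obj (ir.obj X) => g ≫ adj_ir.counit.app X)
      = (e.homFromEquiv) ∘ (fun g : i.obj A ⟶ i.obj (ir.obj X) => g ≫ adj_ir.counit.app X)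
        ∘ (e.homFromEquiv.symm) := by
    funext g
    simp [Iso.homFromEquiv]
  rw [key]
  exact (Equiv.bijective _).comp ((base A).comp (Equiv.bijective _))

noncomputable def NX (X : T) : T :=
  (distinguished_cocone_triangle (adj_ir.counit.app X)).choose

noncomputable def gN (X : T) : X ⟶ NX i ir adj_ir X :=
  (distinguished_cocone_triangle (adj_ir.counit.app X)).choose_spec.choose

noncomputable def hN (X : T) : NX i ir adj_ir X ⟶ (i.obj (ir.obj X))⟦(1 : ℤ)⟧ :=
  (distinguished_cocone_triangle (adj_ir.counit.app X)).choose_spec.choose_spec.choose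

lemma triN (X : T) :
    Triangle.mk (adj_ir.counit.app X) (gN i ir adj_ir X) (hN i ir adj_ir X) ∈ distTriang T :=
  (distinguished_cocone_triangle (adj_ir.counit.app X)).choose_spec.choose_spec.choose_spec

lemma NX_loc (X : T) : isLoc i (NX i ir adj_ir X) := by
  intro A φ
  have c31 : hN i ir adj_ir X ≫ (adj_ir.counit.app X)⟦(1 : ℤ)⟧' = 0 :=
    comp_distTriang_mor_zero₃₁ _ (triN i ir adj_ir X)
  have c12 : adj_ir.counit.app X ≫ gN i ir adj_ir X = 0 :=
    comp_distTriang_mor_zero₁₂ _ (triN i ir adj_ir X)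
  have h1 : φ ≫ hN i ir adj_ir X = 0 := by
    apply (postBij_shift i (eps_bij i ir adj_ir X) 1 _ ⟨A, ⟨Iso.refl _⟩⟩).1
    dsimp only
    rw [Category.assoc, c31, comp_zero, zero_comp]
  obtain ⟨ψ, hψ⟩ := Triangle.coyoneda_exact₃ _ (triN i ir adj_ir X) φ h1
  obtain ⟨χ, hχ⟩ := (eps_bij i ir adj_ir X _ ⟨A, ⟨Iso.refl _⟩⟩).2 ψ
  dsimp only at hψ hχ
  rw [hψ, ← hχ]
  erw [Category.assoc]
  rw [show (Triangle.mk (adj_ir.counit.app X) (gN i ir adj_ir X) (hN i ir adj_ir X)).mor₂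
      = gN i ir adj_ir X from rfl]
  erw [c12, comp_zero]
  rfl

lemma gN_W (X : T) : coneInImage i (gN i ir adj_ir X) :=
  ⟨_, _, _, rot_of_distTriang _ (triN i ir adj_ir X),
    essImage_shift i ⟨ir.obj X, ⟨Iso.refl _⟩⟩ 1⟩

lemma gN_wLoc (X : T) : ObjectProperty.isLocal (isLoc i) (gN i ir adj_ir X) :=
  cone_le_wLoc i (gN_W i ir adj_ir X)

include ir adj_ir in
lemma wLoc_le_cone {X Y : T} {f : X ⟶ Y} (hf : ObjectProperty.isLocal (isLoc i) f) :
    coneInImage i f := by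
  obtain ⟨Z, g, h, hT⟩ := distinguished_cocone_triangle f
  have c12 : f ≫ g = 0 := comp_distTriang_mor_zero₁₂ _ hT
  have c31 : h ≫ f⟦(1 : ℤ)⟧' = 0 := comp_distTriang_mor_zero₃₁ _ hT
  refine ⟨Z, g, h, hT, ?_⟩
  have hZloc : ∀ L, isLoc i L → ∀ (φ : Z ⟶ L), φ = 0 := by
    intro L hL φ
    have h1 : g ≫ φ = 0 := by
      apply (hf L hL).1
      dsimp only
      rw [← Category.assoc, c12, zero_comp, comp_zero]
    obtain ⟨ρ, hρ⟩ := Triangle.yoneda_exact₃ _ hT φ h1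
    have hρ' : φ = h ≫ ρ := hρ
    obtain ⟨σ, hσ⟩ := (wLoc_shift i hf 1 L hL).2 ρ
    have hσ' : f⟦(1 : ℤ)⟧' ≫ σ = ρ := hσ
    rw [hρ', ← hσ', ← Category.assoc, c31, zero_comp]
  -- now show the counit at `Z` is an isomorphism
  have hg0 : gN i ir adj_ir Z = 0 := hZloc _ (NX_loc i ir adj_ir Z) _
  obtain ⟨χ, hχ⟩ := Triangle.coyoneda_exact₂ _ (triN i ir adj_ir Z) (𝟙 Z)
    (show 𝟙 Z ≫ gN i ir adj_ir Z = 0 by rw [hg0, comp_zero])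
  have hχ' : 𝟙 Z = χ ≫ adj_ir.counit.app Z := hχ
  have h2 : adj_ir.counit.app Z ≫ χ = 𝟙 _ := by
    apply (eps_bij i ir adj_ir Z _ ⟨ir.obj Z, ⟨Iso.refl _⟩⟩).1
    dsimp only
    erw [Category.assoc, ← hχ']
    simp
  have : IsIso (adj_ir.counit.app Z) := ⟨χ, h2, hχ'.symm⟩
  exact ⟨ir.obj Z, ⟨asIso (adj_ir.counit.app Z)⟩⟩

noncomputable def Nmap {X Y : T} (f : X ⟶ Y) : NX i ir adj_ir X ⟶ NX i ir adj_ir Y :=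
  ((gN_wLoc i ir adj_ir X).homEquiv _ (NX_loc i ir adj_ir Y)).symm (f ≫ gN i ir adj_ir Y)

lemma Nmap_comm {X Y : T} (f : X ⟶ Y) :
    gN i ir adj_ir X ≫ Nmap i ir adj_ir f = f ≫ gN i ir adj_ir Y := by
  have e1 := ((gN_wLoc i ir adj_ir X).homEquiv _ (NX_loc i ir adj_ir Y)).apply_symm_apply
    (f ≫ gN i ir adj_ir Y)
  exact e1

lemma Nmap_unique {X Y : T} {f : X ⟶ Y} {v : NX i ir adj_ir X ⟶ NX i ir adj_ir Y}
    (hv : gN i ir adj_ir X ≫ v = f ≫ gN i ir adj_ir Y) : v = Nmap i ir adj_ir f := by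
  apply ((gN_wLoc i ir adj_ir X).homEquiv _ (NX_loc i ir adj_ir Y)).injective
  simp only [ObjectProperty.isLocal.homEquiv_apply]
  rw [hv, Nmap_comm]

/-- The localization functor onto local objects. -/
noncomputable def Nfunc : T ⥤ ObjectProperty.FullSubcategory (isLoc i) where
  obj X := ⟨NX i ir adj_ir X, NX_loc i ir adj_ir X⟩
  map {X Y} f := ObjectProperty.homMk (Nmap i ir adj_ir f)
  map_id X := InducedCategory.hom_ext (Nmap_unique i ir adj_ir (show gN i ir adj_ir X ≫ 𝟙 (NX i ir adj_ir X)
    = 𝟙 X ≫ gN i ir adj_ir X by simp)).symm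
  map_comp {X Y Z} f g := InducedCategory.hom_ext (Nmap_unique i ir adj_ir (by
    show gN i ir adj_ir X ≫ Nmap i ir adj_ir f ≫ Nmap i ir adj_ir g = (f ≫ g) ≫ gN i ir adj_ir Z
    rw [← Category.assoc, Nmap_comm, Category.assoc, Nmap_comm, ← Category.assoc])).symm

lemma Nfunc_map {X Y : T} (f : X ⟶ Y) :
    ((Nfunc i ir adj_ir).map f).hom = Nmap i ir adj_ir f := rfl

lemma incl_map_loc {L L' : ObjectProperty.FullSubcategory (isLoc i)} (v : L ⟶ L') :
    (ObjectProperty.ι (isLoc i)).map v = v.hom := rfl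

/-- The adjunction between the localization functor and the inclusion of local objects. -/
noncomputable def adjN : Nfunc i ir adj_ir ⊣ ObjectProperty.ι (isLoc i) :=
  Adjunction.mkOfHomEquiv
    { homEquiv := fun X L => (ObjectProperty.fullyFaithfulι (isLoc i)).homEquiv.trans
        ((gN_wLoc i ir adj_ir X).homEquiv L.obj L.property)
      homEquiv_naturality_left_symm := by
        intro X' X L f g
        apply ((ObjectProperty.fullyFaithfulι (isLoc i)).homEquiv
          (X := (Nfunc i ir adj_ir).obj X') (Y := L) |>.trans
          ((gN_wLoc i ir adj_ir X').homEquiv L.obj L.property)).injective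
        show ((gN_wLoc i ir adj_ir X').homEquiv L.obj L.property)
            (((gN_wLoc i ir adj_ir X').homEquiv L.obj L.property).symm (f ≫ g))
          = ((gN_wLoc i ir adj_ir X').homEquiv L.obj L.property)
            (Nmap i ir adj_ir f ≫ ((gN_wLoc i ir adj_ir X).homEquiv L.obj L.property).symm g)
        rw [Equiv.apply_symm_apply]
        simp only [ObjectProperty.isLocal.homEquiv_apply]
        rw [← Category.assoc, Nmap_comm, Category.assoc]
        congr 1
        have h2 := ((gN_wLoc i ir adj_ir X).homEquiv L.obj L.property).apply_symm_apply g
        simp only [ObjectProperty.isLocal.homEquiv_apply] at h2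
        exact h2.symm
      homEquiv_naturality_right := by
        intro X L L' f g
        show gN i ir adj_ir X ≫ f.hom ≫ g.hom = (gN i ir adj_ir X ≫ f.hom) ≫ g.hom
        exact (Category.assoc _ _ _).symm }

lemma eqW_loc :
    (MorphismProperty.isomorphisms _).inverseImage (Nfunc i ir adj_ir) = coneInImage i := by
  ext X Y f
  constructor
  · intro hf
    have hiso : IsIso ((Nfunc i ir adj_ir).map f) := hf
    have hisoT : IsIso ((ObjectProperty.ι (isLoc i)).map ((Nfunc i ir adj_ir).map f)) :=
      inferInstance
    rw [incl_map_loc, Nfunc_map] at hisoT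
    have hw : ObjectProperty.isLocal (isLoc i) (Nmap i ir adj_ir f) :=
      by haveI : IsIso (Nmap i ir adj_ir f) := hisoT; exact ObjectProperty.isLocal_of_isIso _ _
    have hcomp : ObjectProperty.isLocal (isLoc i) (f ≫ gN i ir adj_ir Y) := by
      rw [← Nmap_comm i ir adj_ir f]
      exact (ObjectProperty.isLocal (isLoc i)).comp_mem _ _ (gN_wLoc i ir adj_ir X) hw
    exact wLoc_le_cone i ir adj_ir
      ((ObjectProperty.isLocal (isLoc i)).of_postcomp f (gN i ir adj_ir Y)
        (gN_wLoc i ir adj_ir Y) hcomp)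
  · intro hf
    have hw : ObjectProperty.isLocal (isLoc i) (f ≫ gN i ir adj_ir Y) :=
      (ObjectProperty.isLocal (isLoc i)).comp_mem _ _ (cone_le_wLoc i hf) (gN_wLoc i ir adj_ir Y)
    have hmap : ObjectProperty.isLocal (isLoc i) (Nmap i ir adj_ir f) := by
      refine (ObjectProperty.isLocal (isLoc i)).of_precomp (gN i ir adj_ir X) _
        (gN_wLoc i ir adj_ir X) ?_
      rw [Nmap_comm]
      exact hw
    have h1 : IsIso (Nmap i ir adj_ir f) := by
      rw [← ObjectProperty.isLocal_iff_isIso (isLoc i) _ (NX_loc i ir adj_ir X) (NX_loc i ir adj_ir Y)]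
      exact hmap
    have h2 : IsIso ((ObjectProperty.ι (isLoc i)).map ((Nfunc i ir adj_ir).map f)) := by
      rw [incl_map_loc, Nfunc_map]; exact h1
    exact isIso_of_fully_faithful (ObjectProperty.ι (isLoc i)) _

end RightAdjoint

section LeftAdjoint

variable (i : T' ⥤ T) [i.CommShift ℤ] [i.Full] [i.Faithful]
  (il : T ⥤ T') (adj_il : il ⊣ i)

lemma unit_bij (X : T) :
    ∀ Z, i.essImage Z →
      Function.Bijective (fun g : i.obj (il.obj X) ⟶ Z => adj_il.unit.app X ≫ g) := by
  have base : ∀ (A : T'),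
      Function.Bijective (fun g : i.obj (il.obj X) ⟶ i.obj A => adj_il.unit.app X ≫ g) := by
    intro A
    have key : (fun g : i.obj (il.obj X) ⟶ i.obj A => adj_il.unit.app X ≫ g)
        = (adj_il.homEquiv X A) ∘
          ((Functor.FullyFaithful.ofFullyFaithful i).homEquiv
            (X := il.obj X) (Y := A)).symm := by
      funext g
      dsimp only [Function.comp]
      rw [Adjunction.homEquiv_unit]
      congr 1
      exact ((Functor.FullyFaithful.ofFullyFaithful i).map_preimage g).symm
    rw [key]
    exact (Equiv.bijective _).comp (Equiv.bijective _)
  intro Z hZ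
  obtain ⟨A, ⟨e⟩⟩ := hZ
  have key : (fun g : i.obj (il.obj X) ⟶ Z => adj_il.unit.app X ≫ g)
      = (e.homToEquiv) ∘ (fun g : i.obj (il.obj X) ⟶ i.obj A => adj_il.unit.app X ≫ g)
        ∘ (e.homToEquiv.symm) := by
    funext g
    simp [Iso.homToEquiv]
  rw [key]
  exact (Equiv.bijective _).comp ((base A).comp (Equiv.bijective _))

noncomputable def MX (X : T) : T :=
  (distinguished_cocone_triangle₁ (adj_il.unit.app X)).choose

noncomputable def mM (X : T) : MX i il adj_il X ⟶ X :=
  (distinguished_cocone_triangle₁ (adj_il.unit.app X)).choose_spec.choose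

noncomputable def hM (X : T) : i.obj (il.obj X) ⟶ (MX i il adj_il X)⟦(1 : ℤ)⟧ :=
  (distinguished_cocone_triangle₁ (adj_il.unit.app X)).choose_spec.choose_spec.choose

lemma triM (X : T) :
    Triangle.mk (mM i il adj_il X) (adj_il.unit.app X) (hM i il adj_il X) ∈ distTriang T :=
  (distinguished_cocone_triangle₁ (adj_il.unit.app X)).choose_spec.choose_spec.choose_spec

lemma MX_coloc (X : T) : isColoc i (MX i il adj_il X) := by
  intro A φ
  have c12 : mM i il adj_il X ≫ adj_il.unit.app X = 0 :=
    comp_distTriang_mor_zero₁₂ _ (triM i il adj_il X)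
  have c23 : adj_il.unit.app X ≫ hM i il adj_il X = 0 :=
    comp_distTriang_mor_zero₂₃ _ (triM i il adj_il X)
  have h1 : hM i il adj_il X ≫ φ⟦(1 : ℤ)⟧' = 0 := by
    apply (unit_bij i il adj_il X _ (essImage_shift i ⟨A, ⟨Iso.refl _⟩⟩ 1)).1
    dsimp only
    rw [← Category.assoc, c23, zero_comp, comp_zero]
  obtain ⟨χ, hχ⟩ := Triangle.yoneda_exact₃ _ (rot_of_distTriang _ (triM i il adj_il X))
    (φ⟦(1 : ℤ)⟧') h1
  obtain ⟨ρ, hρ⟩ := (preBij_shift i (unit_bij i il adj_il X) 1 _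
    (essImage_shift i ⟨A, ⟨Iso.refl _⟩⟩ 1)).2 χ
  dsimp only at hχ hρ
  apply (shiftFunctor T (1 : ℤ)).map_injective
  erw [Functor.map_zero, hχ, ← hρ]
  rw [show (Triangle.mk (mM i il adj_il X) (adj_il.unit.app X)
    (hM i il adj_il X)).rotate.mor₃ = -(mM i il adj_il X)⟦(1 : ℤ)⟧' from rfl]
  erw [Preadditive.neg_comp, ← Category.assoc, ← Functor.map_comp, c12,
    Functor.map_zero, zero_comp, neg_zero]
  rfl

lemma mM_W (X : T) : coneInImage i (mM i il adj_il X) :=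
  ⟨_, _, _, triM i il adj_il X, ⟨il.obj X, ⟨Iso.refl _⟩⟩⟩

lemma mM_wColoc (X : T) : wColoc i (mM i il adj_il X) :=
  cone_le_wColoc i (mM_W i il adj_il X)

-- two-out-of-three style lemmas for `wColoc`
lemma wColoc_comp {X Y Z : T} {f : X ⟶ Y} {g : Y ⟶ Z} (hf : wColoc i f) (hg : wColoc i g) :
    wColoc i (f ≫ g) := by
  intro L hL
  have key : (fun u : L ⟶ X => u ≫ (f ≫ g))
      = (fun u : L ⟶ Y => u ≫ g) ∘ (fun u : L ⟶ X => u ≫ f) := by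
    funext u; simp [Function.comp]
  rw [key]
  exact (hg L hL).comp (hf L hL)

lemma wColoc_of_postcomp {X Y Z : T} {f : X ⟶ Y} {g : Y ⟶ Z} (hg : wColoc i g)
    (hfg : wColoc i (f ≫ g)) : wColoc i f := by
  intro L hL
  have key : (fun u : L ⟶ X => u ≫ (f ≫ g))
      = (fun u : L ⟶ Y => u ≫ g) ∘ (fun u : L ⟶ X => u ≫ f) := by
    funext u; simp [Function.comp]
  have h3 := hfg L hL
  rw [key] at h3
  exact (Function.Bijective.of_comp_iff' (hg L hL) _).mp h3

lemma wColoc_of_precomp {X Y Z : T} {f : X ⟶ Y} {g : Y ⟶ Z} (hf : wColoc i f)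
    (hfg : wColoc i (f ≫ g)) : wColoc i g := by
  intro L hL
  have key : (fun u : L ⟶ X => u ≫ (f ≫ g))
      = (fun u : L ⟶ Y => u ≫ g) ∘ (fun u : L ⟶ X => u ≫ f) := by
    funext u; simp [Function.comp]
  have h3 := hfg L hL
  rw [key] at h3
  exact (Function.Bijective.of_comp_iff _ (hf L hL)).mp h3

lemma wColoc_of_isIso {X Y : T} (f : X ⟶ Y) [IsIso f] : wColoc i f := by
  intro L hL
  constructor
  · intro u₁ u₂ hu
    dsimp only at hu
    rwa [cancel_mono] at hu
  · intro u
    exact ⟨u ≫ inv f, by simp⟩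

lemma wColoc_iff_isIso {X Y : T} (f : X ⟶ Y) (hX : isColoc i X) (hY : isColoc i Y) :
    wColoc i f ↔ IsIso f := by
  constructor
  · intro hf
    obtain ⟨w, hw⟩ := (hf Y hY).2 (𝟙 Y)
    dsimp only at hw
    refine ⟨w, ?_, hw⟩
    apply (hf X hX).1
    dsimp only
    rw [Category.assoc, hw, Category.comp_id, Category.id_comp]
  · intro hf
    exact wColoc_of_isIso i f

include il adj_il in
lemma wColoc_le_cone {X Y : T} {f : X ⟶ Y} (hf : wColoc i f) :
    coneInImage i f := by
  obtain ⟨Z, g, h, hT⟩ := distinguished_cocone_triangle f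
  have c12 : f ≫ g = 0 := comp_distTriang_mor_zero₁₂ _ hT
  have c23 : g ≫ h = 0 := comp_distTriang_mor_zero₂₃ _ hT
  have c31 : h ≫ f⟦(1 : ℤ)⟧' = 0 := comp_distTriang_mor_zero₃₁ _ hT
  refine ⟨Z, g, h, hT, ?_⟩
  have hZcoloc : ∀ L, isColoc i L → ∀ (ψ : L ⟶ Z), ψ = 0 := by
    intro L hL ψ
    have h1 : ψ ≫ h = 0 := by
      apply (wColoc_shift i hf 1 L hL).1
      dsimp only
      rw [Category.assoc, c31, comp_zero, zero_comp]
    obtain ⟨χ, hχ⟩ := Triangle.coyoneda_exact₃ _ hT ψ h1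
    have hχ0 : ψ = χ ≫ g := hχ
    obtain ⟨χ', hχ'⟩ := (hf L hL).2 χ
    have hχ'0 : χ' ≫ f = χ := hχ'
    rw [hχ0, ← hχ'0]
    erw [Category.assoc, c12, comp_zero]
  have hm0 : mM i il adj_il Z = 0 := hZcoloc _ (MX_coloc i il adj_il Z) _
  obtain ⟨χ, hχ⟩ := Triangle.yoneda_exact₂ _ (triM i il adj_il Z) (𝟙 Z)
    (show mM i il adj_il Z ≫ 𝟙 Z = 0 by rw [hm0, zero_comp])
  have hχ2 : 𝟙 Z = adj_il.unit.app Z ≫ χ := hχ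
  have h2 : χ ≫ adj_il.unit.app Z = 𝟙 _ := by
    apply (unit_bij i il adj_il Z _ ⟨il.obj Z, ⟨Iso.refl _⟩⟩).1
    dsimp only
    erw [← Category.assoc, ← hχ2]
    exact (Category.id_comp _).trans (Category.comp_id (adj_il.unit.app Z)).symm
  have : IsIso (adj_il.unit.app Z) := ⟨χ, hχ2.symm, h2⟩
  exact ⟨il.obj Z, ⟨(asIso (adj_il.unit.app Z)).symm⟩⟩

noncomputable def Mequiv (X : T) (L : T) (hL : isColoc i L) :
    (L ⟶ X) ≃ (L ⟶ MX i il adj_il X) :=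
  (Equiv.ofBijective _ (mM_wColoc i il adj_il X L hL)).symm

lemma Mequiv_symm_apply (X : T) (L : T) (hL : isColoc i L) (u : L ⟶ MX i il adj_il X) :
    (Mequiv i il adj_il X L hL).symm u = u ≫ mM i il adj_il X := rfl

noncomputable def Mmap {X Y : T} (f : X ⟶ Y) : MX i il adj_il X ⟶ MX i il adj_il Y :=
  Mequiv i il adj_il Y _ (MX_coloc i il adj_il X) (mM i il adj_il X ≫ f)

lemma Mmap_comm {X Y : T} (f : X ⟶ Y) :
    Mmap i il adj_il f ≫ mM i il adj_il Y = mM i il adj_il X ≫ f := by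
  have e1 := (Mequiv i il adj_il Y _ (MX_coloc i il adj_il X)).symm_apply_apply
    (mM i il adj_il X ≫ f)
  rw [Mequiv_symm_apply] at e1
  exact e1

lemma Mmap_unique {X Y : T} {f : X ⟶ Y} {v : MX i il adj_il X ⟶ MX i il adj_il Y}
    (hv : v ≫ mM i il adj_il Y = mM i il adj_il X ≫ f) : v = Mmap i il adj_il f := by
  apply (Mequiv i il adj_il Y _ (MX_coloc i il adj_il X)).symm.injective
  rw [Mequiv_symm_apply, Mequiv_symm_apply, hv, Mmap_comm]

/-- The colocalization functor onto colocal objects. -/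
noncomputable def Mfunc : T ⥤ ObjectProperty.FullSubcategory (isColoc i) where
  obj X := ⟨MX i il adj_il X, MX_coloc i il adj_il X⟩
  map {X Y} f := ObjectProperty.homMk (Mmap i il adj_il f)
  map_id X := InducedCategory.hom_ext (Mmap_unique i il adj_il (show 𝟙 (MX i il adj_il X) ≫ mM i il adj_il X
    = mM i il adj_il X ≫ 𝟙 X by simp)).symm
  map_comp {X Y Z} f g := InducedCategory.hom_ext (Mmap_unique i il adj_il (by
    show (Mmap i il adj_il f ≫ Mmap i il adj_il g) ≫ mM i il adj_il Z
      = mM i il adj_il X ≫ f ≫ g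
    rw [Category.assoc, Mmap_comm, ← Category.assoc, Mmap_comm, Category.assoc])).symm

lemma Mfunc_map {X Y : T} (f : X ⟶ Y) :
    ((Mfunc i il adj_il).map f).hom = Mmap i il adj_il f := rfl

lemma incl_map_coloc {L L' : ObjectProperty.FullSubcategory (isColoc i)} (v : L ⟶ L') :
    (ObjectProperty.ι (isColoc i)).map v = v.hom := rfl

/-- The adjunction between the inclusion of colocal objects and the colocalization functor. -/
noncomputable def adjM : ObjectProperty.ι (isColoc i) ⊣ Mfunc i il adj_il :=
  Adjunction.mkOfHomEquiv
    { homEquiv := fun L X => (Mequiv i il adj_il X L.obj L.property).trans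
        ((ObjectProperty.fullyFaithfulι (isColoc i)).homEquiv
          (X := L) (Y := (Mfunc i il adj_il).obj X)).symm
      homEquiv_naturality_left_symm := by
        intro L' L X f g
        show (f.hom ≫ g.hom) ≫ mM i il adj_il X = f.hom ≫ g.hom ≫ mM i il adj_il X
        exact Category.assoc _ _ _
      homEquiv_naturality_right := by
        intro L X X' f g
        apply ((Mequiv i il adj_il X' L.obj L.property).trans
          ((ObjectProperty.fullyFaithfulι (isColoc i)).homEquiv
            (X := L) (Y := (Mfunc i il adj_il).obj X')).symm).symm.injective
        show (Mequiv i il adj_il X' L.obj L.property).symm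
            ((Mequiv i il adj_il X' L.obj L.property) (f ≫ g))
          = (Mequiv i il adj_il X' L.obj L.property).symm
            ((Mequiv i il adj_il X L.obj L.property) f ≫ Mmap i il adj_il g)
        rw [Equiv.symm_apply_apply, Mequiv_symm_apply]
        show f ≫ g = ((Mequiv i il adj_il X L.obj L.property) f ≫ Mmap i il adj_il g)
          ≫ mM i il adj_il X'
        rw [Category.assoc, Mmap_comm, ← Category.assoc]
        congr 1
        have h2 := (Mequiv i il adj_il X L.obj L.property).symm_apply_apply f
        rw [Mequiv_symm_apply] at h2
        exact h2.symm }

lemma eqW_coloc :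
    (MorphismProperty.isomorphisms _).inverseImage (Mfunc i il adj_il) = coneInImage i := by
  ext X Y f
  constructor
  · intro hf
    have hiso : IsIso ((Mfunc i il adj_il).map f) := hf
    have hisoT : IsIso ((ObjectProperty.ι (isColoc i)).map ((Mfunc i il adj_il).map f)) :=
      inferInstance
    rw [incl_map_coloc, Mfunc_map] at hisoT
    have hw : wColoc i (Mmap i il adj_il f) := by
      haveI : IsIso (Mmap i il adj_il f) := hisoT; exact wColoc_of_isIso i _
    have hcomp : wColoc i (mM i il adj_il X ≫ f) := by
      rw [← Mmap_comm i il adj_il f]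
      exact wColoc_comp i hw (mM_wColoc i il adj_il Y)
    exact wColoc_le_cone i il adj_il
      (wColoc_of_precomp i (mM_wColoc i il adj_il X) hcomp)
  · intro hf
    have hw : wColoc i (mM i il adj_il X ≫ f) :=
      wColoc_comp i (mM_wColoc i il adj_il X) (cone_le_wColoc i hf)
    have hmap : wColoc i (Mmap i il adj_il f) := by
      refine wColoc_of_postcomp i (mM_wColoc i il adj_il Y) ?_
      rw [Mmap_comm]
      exact hw
    have h1 : IsIso (Mmap i il adj_il f) := by
      rw [← wColoc_iff_isIso i _ (MX_coloc i il adj_il X) (MX_coloc i il adj_il Y)]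
      exact hmap
    have h2 : IsIso ((ObjectProperty.ι (isColoc i)).map ((Mfunc i il adj_il).map f)) := by
      rw [incl_map_coloc, Mfunc_map]; exact h1
    exact isIso_of_fully_faithful (ObjectProperty.ι (isColoc i)) _

end LeftAdjoint

end Stmt7Aux

open Stmt7Aux Localization ZeroObject

/-- Let `i : T' ⥤ T` be a fully faithful triangle functor admitting a left adjoint `i_λ`
and a right adjoint `i_ρ`, and let `q : T ⥤ T/Im(i)` be the Verdier quotient functor
(a localization with respect to the morphisms whose cone lies in `Im(i)`).  Then `q`
admits fully faithful left and right adjoints, and `Im(i) = Ker(q)`; i.e. the diagram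
`(i_λ, i, i_ρ; q, q_λ, q_ρ)` is a recollement. -/
theorem stmt_7 (i : T' ⥤ T) [i.CommShift ℤ] [i.IsTriangulated] [i.Full] [i.Faithful]
    (il ir : T ⥤ T') (adj_il : il ⊣ i) (adj_ir : i ⊣ ir)
    {Q : Type*} [Category Q] [Preadditive Q] [HasZeroObject Q] [HasShift Q ℤ]
    [∀ n : ℤ, (shiftFunctor Q n).Additive] [Pretriangulated Q]
    (q : T ⥤ Q) [q.CommShift ℤ] [q.IsTriangulated] [q.IsLocalization (coneInImage i)] :
    ∃ (ql qr : Q ⥤ T), Nonempty (ql ⊣ q) ∧ Nonempty (q ⊣ qr) ∧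
      ql.Full ∧ ql.Faithful ∧ qr.Full ∧ qr.Faithful ∧
      (∀ X : T, i.essImage X ↔ IsZero (q.obj X)) := by
  classical
  -- the two Bousfield localizations
  have hNloc : (Nfunc i ir adj_ir).IsLocalization (coneInImage i) := by
    have h := (adjN i ir adj_ir).isLocalization
    rwa [eqW_loc i ir adj_ir] at h
  have hMloc : (Mfunc i il adj_il).IsLocalization (coneInImage i) := by
    have h := isLocalization_of_leftAdjoint_fullyFaithful (adjM i il adj_il)
    rwa [eqW_coloc i il adj_il] at h
  haveI := hNloc
  haveI := hMloc
  -- equivalences with Q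
  let Er := Localization.uniq q (Nfunc i ir adj_ir) (coneInImage i)
  let Ec := Localization.uniq q (Mfunc i il adj_il) (coneInImage i)
  let qr : Q ⥤ T := Er.functor ⋙ ObjectProperty.ι (isLoc i)
  let ql : Q ⥤ T := Ec.functor ⋙ ObjectProperty.ι (isColoc i)
  refine ⟨ql, qr, ?_, ?_, ?_, ?_, ?_, ?_, ?_⟩
  · -- ql ⊣ q
    refine ⟨Adjunction.ofNatIsoRight (Ec.toAdjunction.comp (adjM i il adj_il)) ?_⟩
    exact Localization.compUniqInverse q (Mfunc i il adj_il) (coneInImage i)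
  · -- q ⊣ qr
    refine ⟨Adjunction.ofNatIsoLeft ((adjN i ir adj_ir).comp Er.symm.toAdjunction) ?_⟩
    exact Localization.compUniqInverse q (Nfunc i ir adj_ir) (coneInImage i)
  · exact Functor.Full.comp _ _
  · exact Functor.Faithful.comp _ _
  · exact Functor.Full.comp _ _
  · exact Functor.Faithful.comp _ _
  · -- Im(i) = Ker(q)
    intro X
    have hq0 : IsZero (q.obj 0) := by
      rw [IsZero.iff_id_eq_zero, ← q.map_id, Limits.id_zero, q.map_zero]
    constructor
    · intro hX
      have hw : coneInImage i (0 : X ⟶ 0) :=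
        ⟨X⟦(1 : ℤ)⟧, 0, -(𝟙 X)⟦(1 : ℤ)⟧', rot_of_distTriang _ (contractible_distinguished X),
          essImage_shift i hX 1⟩
      have : IsIso (q.map (0 : X ⟶ 0)) := Localization.inverts q (coneInImage i) _ hw
      exact IsZero.of_iso hq0 (asIso (q.map (0 : X ⟶ 0)))
    · intro hX
      -- the map `X ⟶ 0` becomes an isomorphism in `Q`
      haveI hiso : IsIso (q.map (0 : X ⟶ 0)) :=
        ⟨0, hX.eq_of_src _ _, hq0.eq_of_src _ _⟩
      -- hence it becomes an isomorphism under `Nfunc` as well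
      have hiso2 : IsIso ((Nfunc i ir adj_ir).map (0 : X ⟶ 0)) := by
        have e := Localization.compUniqFunctor q (Nfunc i ir adj_ir) (coneInImage i)
        rw [← NatIso.isIso_map_iff e (0 : X ⟶ 0)]
        show IsIso (Er.functor.map (q.map (0 : X ⟶ 0)))
        infer_instance
      have hw : coneInImage i (0 : X ⟶ 0) := by
        rw [← eqW_loc i ir adj_ir]
        exact hiso2
      -- identify the cone with `X⟦1⟧`
      obtain ⟨Z, g, h, hT, hZ⟩ := hw
      obtain ⟨e, -⟩ := exists_iso_of_arrow_iso _ _ hT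
        (rot_of_distTriang _ (contractible_distinguished X)) (Iso.refl _)
      have hX1 : i.essImage (X⟦(1 : ℤ)⟧) :=
        Functor.essImage.ofIso (Triangle.π₃.mapIso e) hZ
      have h2 : i.essImage ((X⟦(1 : ℤ)⟧)⟦(-1 : ℤ)⟧) := essImage_shift i hX1 (-1)
      exact Functor.essImage.ofIso ((shiftEquiv T (1 : ℤ)).unitIso.app X).symm h2
end
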